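/- arXiv:math/0602008 — 3 statements merged into one kernel-verified Lean document; each statement's English description precedes it below -/
import Mathlib

section
/- Let p > 1, α > 1 − 1/p, and let f be a continuous real-valued function on [0,2]. Then for all 0 ≤ s < t ≤ 2 with t − s ≤ 1, |f(t) − f(s)|^p ≤ 2^{p−1} c(α,p)^p Σ_{i=0}^∞ (i+1)^{αp} Σ_k |f((k+1) 2^{−(n(t−s)+i)}) − f(k 2^{−(n(t−s)+i)})|^p, where for each i the inner sum runs over all integers k with s ≤ k 2^{−(n(t−s)+i)} and (k+1) 2^{−(n(t−s)+i)} ≤ t. -/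
/-!
Approximate `s` from above and `t` from below on the dyadic grids of mesh `2⁻ᵐ`, `m ≥ N`. Since
`2⁻ᴺ ≤ t - s < 2 · 2⁻ᴺ`, at level `N` the two approximations coincide or are adjacent grid points;
passing from level `m` to `m + 1` moves each of them by at most one grid interval of level `m + 1`,
and these two intervals are distinct and lie in `[s, t]`. By continuity `|f t - f s|` is bounded
by the series of these moves, whose `i`-th term `Bᵢ` satisfies `Bᵢ ^ p ≤ 2 ^ (p - 1) Sᵢ`, where `Sᵢ`
is the inner sum at level `N + i`. Hölder's inequality with the weights `(i + 1) ^ (± α)` gives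
`(∑ Bᵢ) ^ p ≤ c(α,p) ^ p ∑ (i + 1) ^ (α p) Bᵢ ^ p`.
-/

open Filter Finset
open scoped ENNReal Topology

/-- The constant `c(α,p) = (∑_{n=1}^∞ n^{-αp/(p-1)})^{(p-1)/p}`. -/
noncomputable def cConst (α p : ℝ) : ℝ :=
  (∑' n : ℕ, ((n : ℝ) + 1) ^ (-(α * p / (p - 1)))) ^ ((p - 1) / p)

section FloorRing

variable {R : Type*} [Field R] [LinearOrder R] [IsStrictOrderedRing R] [FloorRing R]

theorem Int.ceil_two_mul_mem_Icc (x : R) : ⌈2 * x⌉ ≤ 2 * ⌈x⌉ ∧ 2 * ⌈x⌉ ≤ ⌈2 * x⌉ + 1 := by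
  have h₁ : ⌈2 * x⌉ ≤ 2 * ⌈x⌉ := Int.ceil_le.2 (by push_cast; linarith [Int.le_ceil x])
  have h₂ : 2 * ⌈x⌉ - 2 < ⌈2 * x⌉ :=
    Int.lt_ceil.2 (by push_cast; linarith [Int.ceil_lt_add_one x])
  omega

theorem Int.floor_two_mul_mem_Icc (x : R) : 2 * ⌊x⌋ ≤ ⌊2 * x⌋ ∧ ⌊2 * x⌋ ≤ 2 * ⌊x⌋ + 1 := by
  have h₁ : 2 * ⌊x⌋ ≤ ⌊2 * x⌋ := Int.le_floor.2 (by push_cast; linarith [Int.floor_le x])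
  have h₂ : ⌊2 * x⌋ < 2 * ⌊x⌋ + 2 :=
    Int.floor_lt.2 (by push_cast; linarith [Int.lt_floor_add_one x])
  omega

theorem Int.ceil_le_floor_of_add_one_le {x y : R} (h : x + 1 ≤ y) : ⌈x⌉ ≤ ⌊y⌋ :=
  calc ⌈x⌉ ≤ ⌊x⌋ + 1 := Int.ceil_le_floor_add_one x
    _ = ⌊x + 1⌋ := (Int.floor_add_one x).symm
    _ ≤ ⌊y⌋ := Int.floor_le_floor h

theorem Int.floor_le_ceil_add_one_of_lt_add_two {x y : R} (h : y < x + 2) : ⌊y⌋ ≤ ⌈x⌉ + 1 := by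
  have : (⌊y⌋ : R) < ⌈x⌉ + 2 := by linarith [Int.floor_le y, Int.le_ceil x]
  have : ⌊y⌋ < ⌈x⌉ + 2 := by exact_mod_cast this
  omega

end FloorRing

theorem Finset.sum_Ico_add_sum_Ico_le {α M : Type*} [LinearOrder α] [LocallyFiniteOrder α]
    [AddCommMonoid M] [PartialOrder M] [IsOrderedAddMonoid M] [CanonicallyOrderedAdd M]
    (F : α → M) {a b c d : α} (hab : a ≤ b) (hbc : b ≤ c) (hcd : c ≤ d) :
    ∑ k ∈ Ico a b, F k + ∑ k ∈ Ico c d, F k ≤ ∑ k ∈ Ico a d, F k := by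
  rw [← sum_union (disjoint_of_subset_right (Ico_subset_Ico_left hbc)
    (Ico_disjoint_Ico_consecutive a b d))]
  exact sum_le_sum_of_subset (union_subset (Ico_subset_Ico_right (hbc.trans hcd))
    (Ico_subset_Ico_left (hab.trans hbc)))

theorem ENNReal.tsum_mul_le_Lp_mul_Lq {ι : Type*} (f g : ι → ℝ≥0∞) {p q : ℝ}
    (hpq : p.HolderConjugate q) :
    ∑' i, f i * g i ≤ (∑' i, f i ^ p) ^ (1 / p) * (∑' i, g i ^ q) ^ (1 / q) :=
  ENNReal.summable.tsum_le_of_sum_le fun s =>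
    (ENNReal.inner_le_Lp_mul_Lq s f g hpq).trans <| by
      gcongr
      · exact hpq.one_div_nonneg
      · exact ENNReal.sum_le_tsum s
      · exact hpq.symm.one_div_nonneg
      · exact ENNReal.sum_le_tsum s

theorem ofReal_abs_le_tsum_of_tendsto {x c : ℕ → ℝ} {L : ℝ} (hx : Tendsto x atTop (𝓝 L))
    (h₀ : |x 0| ≤ c 0) (hc : ∀ n, |x (n + 1) - x n| ≤ c (n + 1)) :
    ENNReal.ofReal |L| ≤ ∑' n, ENNReal.ofReal (c n) := by
  have partial_sum (n : ℕ) :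
      ENNReal.ofReal |x n| ≤ ∑ i ∈ range (n + 1), ENNReal.ofReal (c i) := by
    induction n with
    | zero => simpa using ENNReal.ofReal_le_ofReal h₀
    | succ n ih =>
      rw [sum_range_succ]
      calc ENNReal.ofReal |x (n + 1)| ≤ ENNReal.ofReal (|x n| + c (n + 1)) :=
            ENNReal.ofReal_le_ofReal <| by
              linarith [abs_sub_abs_le_abs_sub (x (n + 1)) (x n), hc n]
        _ ≤ ENNReal.ofReal |x n| + ENNReal.ofReal (c (n + 1)) := ENNReal.ofReal_add_le
        _ ≤ _ := by gcongr
  exact le_of_tendsto' ((ENNReal.continuous_ofReal.tendsto _).comp hx.abs)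
    fun n => (partial_sum n).trans (ENNReal.sum_le_tsum _)

theorem ofReal_abs_sub_rpow_eq_sum_Ico (g : ℤ → ℝ) {p : ℝ} (hp : 0 < p) {j l : ℤ}
    (hjl : j ≤ l) (hlj : l ≤ j + 1) :
    ENNReal.ofReal (|g l - g j| ^ p) = ∑ k ∈ Ico j l, ENNReal.ofReal (|g (k + 1) - g k| ^ p) := by
  obtain rfl | rfl : l = j ∨ l = j + 1 := by omega
  · simp [Real.zero_rpow hp.ne']
  · rw [Ico_add_one_right_eq_Icc, Icc_self, sum_singleton]

noncomputable def dyadicCeil (x : ℝ) (m : ℕ) : ℝ := ⌈x * 2 ^ m⌉ / 2 ^ m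

noncomputable def dyadicFloor (x : ℝ) (m : ℕ) : ℝ := ⌊x * 2 ^ m⌋ / 2 ^ m

section Dyadic

variable (x : ℝ) (m : ℕ)

theorem le_dyadicCeil : x ≤ dyadicCeil x m :=
  (le_div_iff₀ (by positivity)).2 (Int.le_ceil _)

theorem dyadicCeil_lt : dyadicCeil x m < x + (2 ^ m)⁻¹ := by
  rw [dyadicCeil, div_lt_iff₀ (by positivity), add_mul, inv_mul_cancel₀ (by positivity)]
  exact Int.ceil_lt_add_one _

theorem dyadicFloor_le : dyadicFloor x m ≤ x :=
  (div_le_iff₀ (by positivity)).2 (Int.floor_le _)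

theorem lt_dyadicFloor : x - (2 ^ m)⁻¹ < dyadicFloor x m := by
  rw [dyadicFloor, lt_div_iff₀ (by positivity), sub_mul, inv_mul_cancel₀ (by positivity)]
  exact Int.sub_one_lt_floor _

theorem tendsto_two_pow_inv : Tendsto (fun m : ℕ => ((2 : ℝ) ^ m)⁻¹) atTop (𝓝 0) :=
  tendsto_inv_atTop_zero.comp (tendsto_pow_atTop_atTop_of_one_lt one_lt_two)

theorem tendsto_dyadicCeil : Tendsto (dyadicCeil x) atTop (𝓝 x) :=
  tendsto_of_tendsto_of_tendsto_of_le_of_le tendsto_const_nhds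
    (by simpa using tendsto_const_nhds.add tendsto_two_pow_inv) (le_dyadicCeil x)
    fun m => (dyadicCeil_lt x m).le

theorem tendsto_dyadicFloor : Tendsto (dyadicFloor x) atTop (𝓝 x) :=
  tendsto_of_tendsto_of_tendsto_of_le_of_le
    (by simpa using tendsto_const_nhds.sub tendsto_two_pow_inv) tendsto_const_nhds
    (fun m => (lt_dyadicFloor x m).le) (dyadicFloor_le x)

theorem int_div_two_pow_eq (k : ℤ) : (k : ℝ) / 2 ^ m = ((2 * k : ℤ) : ℝ) / 2 ^ (m + 1) := by
  push_cast
  rw [pow_succ]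
  field_simp

end Dyadic

section Grid

variable {s t : ℝ} {m : ℕ}

theorem ceil_mul_le_floor_mul (h : (2 ^ m)⁻¹ ≤ t - s) : ⌈s * 2 ^ m⌉ ≤ ⌊t * 2 ^ m⌋ := by
  refine Int.ceil_le_floor_of_add_one_le ?_
  have := mul_le_mul_of_nonneg_right h (by positivity : (0 : ℝ) ≤ 2 ^ m)
  rw [inv_mul_cancel₀ (by positivity)] at this
  linarith

theorem floor_mul_le_ceil_mul_add_one (h : t - s < 2 * (2 ^ m)⁻¹) :
    ⌊t * 2 ^ m⌋ ≤ ⌈s * 2 ^ m⌉ + 1 := by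
  refine Int.floor_le_ceil_add_one_of_lt_add_two ?_
  have := mul_lt_mul_of_pos_right h (by positivity : (0 : ℝ) < 2 ^ m)
  rw [mul_assoc, inv_mul_cancel₀ (by positivity)] at this
  linarith

theorem dyadicCeil_le_dyadicFloor (h : (2 ^ m)⁻¹ ≤ t - s) : dyadicCeil s m ≤ dyadicFloor t m :=
  div_le_div_of_nonneg_right (by exact_mod_cast ceil_mul_le_floor_mul h) (by positivity)

theorem dyadicCeil_mem_Icc (h : (2 ^ m)⁻¹ ≤ t - s) : dyadicCeil s m ∈ Set.Icc s t :=
  ⟨le_dyadicCeil s m, (dyadicCeil_le_dyadicFloor h).trans (dyadicFloor_le t m)⟩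

theorem dyadicFloor_mem_Icc (h : (2 ^ m)⁻¹ ≤ t - s) : dyadicFloor t m ∈ Set.Icc s t :=
  ⟨(le_dyadicCeil s m).trans (dyadicCeil_le_dyadicFloor h), dyadicFloor_le t m⟩

end Grid

noncomputable def dyadicIncrSum (f : ℝ → ℝ) (p s t : ℝ) (m : ℕ) : ℝ≥0∞ :=
  ∑ k ∈ Ico ⌈s * 2 ^ m⌉ ⌊t * 2 ^ m⌋,
    ENNReal.ofReal (|f ((k + 1 : ℤ) / 2 ^ m) - f (k / 2 ^ m)| ^ p)

/-- The term `i` bounds the change of `f (dyadicFloor t m) - f (dyadicCeil s m)` between the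
levels `m = N + i - 1` and `m = N + i`, counting it from `0` at level `N - 1`. -/
noncomputable def chainIncrement (f : ℝ → ℝ) (s t : ℝ) (N : ℕ) : ℕ → ℝ
  | 0 => |f (dyadicFloor t N) - f (dyadicCeil s N)|
  | i + 1 => |f (dyadicFloor t (N + i + 1)) - f (dyadicFloor t (N + i))| +
      |f (dyadicCeil s (N + i)) - f (dyadicCeil s (N + i + 1))|

section Increments

variable (f : ℝ → ℝ) {p s t : ℝ}

theorem tsum_ite_eq_dyadicIncrSum (m : ℕ) :
    (∑' k : ℤ, if s ≤ (k : ℝ) / 2 ^ m ∧ ((k : ℝ) + 1) / 2 ^ m ≤ t then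
      ENNReal.ofReal (|f (((k : ℝ) + 1) / 2 ^ m) - f ((k : ℝ) / 2 ^ m)| ^ p) else 0) =
      dyadicIncrSum f p s t m := by
  have hmem (k : ℤ) : (s ≤ (k : ℝ) / 2 ^ m ∧ ((k : ℝ) + 1) / 2 ^ m ≤ t) ↔
      k ∈ Ico ⌈s * 2 ^ m⌉ ⌊t * 2 ^ m⌋ := by
    rw [mem_Ico, Int.ceil_le, ← Int.add_one_le_iff, Int.le_floor, le_div_iff₀ (by positivity),
      div_le_iff₀ (by positivity)]
    push_cast
    rfl
  rw [tsum_eq_sum fun k hk => if_neg (mt (hmem k).1 hk)]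
  refine sum_congr rfl fun k hk => ?_
  rw [if_pos ((hmem k).2 hk)]
  push_cast
  rfl

theorem ofReal_abs_sub_rpow_eq_dyadicIncrSum (hp : 0 < p) {m : ℕ} (h₁ : (2 ^ m)⁻¹ ≤ t - s)
    (h₂ : t - s < 2 * (2 ^ m)⁻¹) :
    ENNReal.ofReal (|f (dyadicFloor t m) - f (dyadicCeil s m)| ^ p) = dyadicIncrSum f p s t m :=
  ofReal_abs_sub_rpow_eq_sum_Ico (fun k : ℤ => f (k / 2 ^ m)) hp (ceil_mul_le_floor_mul h₁)
    (floor_mul_le_ceil_mul_add_one h₂)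

theorem ofReal_chainIncrement_succ_rpow_le (hp : 1 ≤ p) {N i : ℕ}
    (h : (2 ^ (N + i))⁻¹ ≤ t - s) :
    ENNReal.ofReal (chainIncrement f s t N (i + 1)) ^ p ≤
      2 ^ (p - 1) * dyadicIncrSum f p s t (N + i + 1) := by
  have hp₀ : 0 < p := by linarith
  rw [chainIncrement]
  generalize N + i = m at h ⊢
  set g : ℤ → ℝ := fun k => f (k / 2 ^ (m + 1))
  set a := ⌈s * 2 ^ m⌉
  set b := ⌊t * 2 ^ m⌋
  set a' := ⌈s * 2 ^ (m + 1)⌉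
  set b' := ⌊t * 2 ^ (m + 1)⌋
  have ha' : a' ≤ 2 * a ∧ 2 * a ≤ a' + 1 := by
    simpa only [a, a', pow_succ, mul_left_comm s, mul_comm _ (2 : ℝ)] using
      Int.ceil_two_mul_mem_Icc (s * 2 ^ m)
  have hb' : 2 * b ≤ b' ∧ b' ≤ 2 * b + 1 := by
    simpa only [b, b', pow_succ, mul_left_comm t, mul_comm _ (2 : ℝ)] using
      Int.floor_two_mul_mem_Icc (t * 2 ^ m)
  have bottom : ENNReal.ofReal (|f (dyadicCeil s m) - f (dyadicCeil s (m + 1))| ^ p) =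
      ∑ k ∈ Ico a' (2 * a), ENNReal.ofReal (|g (k + 1) - g k| ^ p) := by
    rw [dyadicCeil, dyadicCeil, int_div_two_pow_eq m a]
    exact ofReal_abs_sub_rpow_eq_sum_Ico g hp₀ ha'.1 (by omega)
  have top : ENNReal.ofReal (|f (dyadicFloor t (m + 1)) - f (dyadicFloor t m)| ^ p) =
      ∑ k ∈ Ico (2 * b) b', ENNReal.ofReal (|g (k + 1) - g k| ^ p) := by
    rw [dyadicFloor, dyadicFloor, int_div_two_pow_eq m b]
    exact ofReal_abs_sub_rpow_eq_sum_Ico g hp₀ hb'.1 hb'.2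
  calc _ ≤ 2 ^ (p - 1) *
        (ENNReal.ofReal (|f (dyadicCeil s m) - f (dyadicCeil s (m + 1))| ^ p) +
          ENNReal.ofReal (|f (dyadicFloor t (m + 1)) - f (dyadicFloor t m)| ^ p)) := by
        rw [ENNReal.ofReal_add (abs_nonneg _) (abs_nonneg _), add_comm,
          ← ENNReal.ofReal_rpow_of_nonneg (abs_nonneg _) hp₀.le,
          ← ENNReal.ofReal_rpow_of_nonneg (abs_nonneg _) hp₀.le]
        exact ENNReal.rpow_add_le_mul_rpow_add_rpow _ _ hp
    _ ≤ 2 ^ (p - 1) * dyadicIncrSum f p s t (m + 1) := by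
        rw [bottom, top]
        gcongr
        exact sum_Ico_add_sum_Ico_le _ ha'.1 (by linarith [ceil_mul_le_floor_mul h]) hb'.1

theorem ofReal_chainIncrement_rpow_le (hp : 1 ≤ p) {N : ℕ} (h₁ : (2 ^ N)⁻¹ ≤ t - s)
    (h₂ : t - s < 2 * (2 ^ N)⁻¹) (i : ℕ) :
    ENNReal.ofReal (chainIncrement f s t N i) ^ p ≤
      2 ^ (p - 1) * dyadicIncrSum f p s t (N + i) := by
  cases i with
  | zero =>
    rw [chainIncrement, ENNReal.ofReal_rpow_of_nonneg (abs_nonneg _) (by linarith),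
      ofReal_abs_sub_rpow_eq_dyadicIncrSum f (by linarith) h₁ h₂]
    refine le_mul_of_one_le_left' ?_
    simpa using ENNReal.rpow_le_rpow_of_exponent_le one_le_two (sub_nonneg.2 hp)
  | succ i =>
    exact ofReal_chainIncrement_succ_rpow_le f hp (h₁.trans' (by gcongr <;> simp))

theorem ofReal_abs_sub_le_tsum_chainIncrement {N : ℕ} (hf : ContinuousOn f (Set.Icc s t))
    (h : (2 ^ N)⁻¹ ≤ t - s) :
    ENNReal.ofReal |f t - f s| ≤ ∑' i, ENNReal.ofReal (chainIncrement f s t N i) := by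
  have hst : s ≤ t := by linarith [show (0 : ℝ) < (2 ^ N)⁻¹ by positivity]
  have hlevel (n : ℕ) : ((2 : ℝ) ^ (N + n))⁻¹ ≤ t - s := h.trans' (by gcongr <;> simp)
  have hN : Tendsto (fun n => N + n) atTop atTop :=
    tendsto_atTop_mono (fun n => Nat.le_add_left n N) tendsto_id
  have hft : Tendsto (fun n => f (dyadicFloor t (N + n))) atTop (𝓝 (f t)) :=
    (hf t ⟨hst, le_rfl⟩).tendsto.comp <| tendsto_nhdsWithin_iff.2
      ⟨(tendsto_dyadicFloor t).comp hN, .of_forall fun n => dyadicFloor_mem_Icc (hlevel n)⟩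
  have hfs : Tendsto (fun n => f (dyadicCeil s (N + n))) atTop (𝓝 (f s)) :=
    (hf s ⟨le_rfl, hst⟩).tendsto.comp <| tendsto_nhdsWithin_iff.2
      ⟨(tendsto_dyadicCeil s).comp hN, .of_forall fun n => dyadicCeil_mem_Icc (hlevel n)⟩
  refine ofReal_abs_le_tsum_of_tendsto (hft.sub hfs) le_rfl fun n => ?_
  calc _ = |(f (dyadicFloor t (N + n + 1)) - f (dyadicFloor t (N + n))) +
        (f (dyadicCeil s (N + n)) - f (dyadicCeil s (N + n + 1)))| := by ring_nf
    _ ≤ _ := abs_add_le _ _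

end Increments
theorem cConst_nonneg (α p : ℝ) : 0 ≤ cConst α p :=
  Real.rpow_nonneg (tsum_nonneg fun _ => by positivity) _

section Holder

variable {p α : ℝ}

theorem ofReal_cConst_eq_tsum_rpow (hp : 1 < p) (hα : 1 - 1 / p < α) :
    ENNReal.ofReal (cConst α p) =
      (∑' i : ℕ, ENNReal.ofReal (((i : ℝ) + 1) ^ (-α)) ^ p.conjExponent) ^
        (1 / p.conjExponent) := by
  have hp₁ : 0 < p - 1 := by linarith
  have hq : p.conjExponent = p / (p - 1) := rfl
  have hexp : 1 < α * p / (p - 1) := by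
    rw [lt_div_iff₀ hp₁]
    rw [show 1 - 1 / p = (p - 1) / p by field_simp, div_lt_iff₀ (by linarith)] at hα
    linarith
  have hsummable : Summable fun i : ℕ => ((i : ℝ) + 1) ^ (-(α * p / (p - 1))) := by
    simpa using (summable_nat_add_iff 1).2 (Real.summable_nat_rpow.2 (neg_lt_neg hexp))
  have hterm (i : ℕ) : ENNReal.ofReal (((i : ℝ) + 1) ^ (-α)) ^ p.conjExponent =
      ENNReal.ofReal (((i : ℝ) + 1) ^ (-(α * p / (p - 1)))) := by
    rw [ENNReal.ofReal_rpow_of_nonneg (by positivity) (by rw [hq]; positivity),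
      ← Real.rpow_mul (by positivity), hq, neg_mul, mul_div_assoc]
  rw [tsum_congr hterm, ← ENNReal.ofReal_tsum_of_nonneg (fun i => by positivity) hsummable,
    ENNReal.ofReal_rpow_of_nonneg (tsum_nonneg fun i => by positivity) (by rw [hq]; positivity),
    cConst, hq, one_div_div]

theorem tsum_rpow_le_cConst_rpow_mul (hp : 1 < p) (hα : 1 - 1 / p < α) (B : ℕ → ℝ≥0∞) :
    (∑' i, B i) ^ p ≤ ENNReal.ofReal (cConst α p) ^ p *
      ∑' i : ℕ, ENNReal.ofReal (((i : ℝ) + 1) ^ (α * p)) * B i ^ p := by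
  have hp₀ : 0 < p := by linarith
  have hsplit (i : ℕ) : B i = ENNReal.ofReal (((i : ℝ) + 1) ^ α) * B i *
      ENNReal.ofReal (((i : ℝ) + 1) ^ (-α)) := by
    rw [mul_right_comm, ← ENNReal.ofReal_mul (by positivity), ← Real.rpow_add (by positivity),
      add_neg_cancel, Real.rpow_zero, ENNReal.ofReal_one, one_mul]
  have hweight (i : ℕ) : (ENNReal.ofReal (((i : ℝ) + 1) ^ α) * B i) ^ p =
      ENNReal.ofReal (((i : ℝ) + 1) ^ (α * p)) * B i ^ p := by
    rw [ENNReal.mul_rpow_of_nonneg _ _ hp₀.le,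
      ENNReal.ofReal_rpow_of_nonneg (by positivity) hp₀.le, ← Real.rpow_mul (by positivity)]
  have holder : ∑' i, B i ≤
      (∑' i : ℕ, ENNReal.ofReal (((i : ℝ) + 1) ^ (α * p)) * B i ^ p) ^ (1 / p) *
        ENNReal.ofReal (cConst α p) :=
    calc ∑' i, B i = ∑' i : ℕ, ENNReal.ofReal (((i : ℝ) + 1) ^ α) * B i *
          ENNReal.ofReal (((i : ℝ) + 1) ^ (-α)) := tsum_congr hsplit
      _ ≤ _ := ENNReal.tsum_mul_le_Lp_mul_Lq _ _ (.conjExponent hp)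
      _ = _ := by rw [tsum_congr hweight, ofReal_cConst_eq_tsum_rpow hp hα]
  calc (∑' i, B i) ^ p ≤ (_ ^ (1 / p) * _) ^ p := ENNReal.rpow_le_rpow holder hp₀.le
    _ = _ := by
      rw [ENNReal.mul_rpow_of_nonneg _ _ hp₀.le, ← ENNReal.rpow_mul, one_div_mul_cancel hp₀.ne',
        ENNReal.rpow_one, mul_comm]

end Holder

theorem increment_dyadic_bound_general (p α : ℝ) (hp : 1 < p) (hα : 1 - 1/p < α)
    (f : ℝ → ℝ) (hf : ContinuousOn f (Set.Icc 0 2))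
    (s t : ℝ) (hs : 0 ≤ s) (ht : t ≤ 2)
    (N : ℕ) (hN1 : (2:ℝ) ^ (-(N:ℤ)) ≤ t - s) (hN2 : t - s < (2:ℝ) ^ (-(N:ℤ) + 1)) :
    ENNReal.ofReal (|f t - f s| ^ p) ≤
      ENNReal.ofReal (2 ^ (p - 1) * cConst α p ^ p) *
        ∑' i : ℕ, ENNReal.ofReal (((i : ℝ) + 1) ^ (α * p)) *
          ∑' k : ℤ, (if s ≤ (k : ℝ) / 2 ^ (N + i) ∧ ((k : ℝ) + 1) / 2 ^ (N + i) ≤ t then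
            ENNReal.ofReal (|f (((k : ℝ) + 1) / 2 ^ (N + i)) - f ((k : ℝ) / 2 ^ (N + i))| ^ p)
            else 0) := by
  have hp₀ : 0 < p := by linarith
  have h₁ : ((2 : ℝ) ^ N)⁻¹ ≤ t - s := by rwa [zpow_neg, zpow_natCast] at hN1
  have h₂ : t - s < 2 * ((2 : ℝ) ^ N)⁻¹ := by
    rwa [zpow_add₀ two_ne_zero, zpow_neg, zpow_natCast, zpow_one, mul_comm] at hN2
  simp_rw [tsum_ite_eq_dyadicIncrSum]
  calc ENNReal.ofReal (|f t - f s| ^ p) = ENNReal.ofReal |f t - f s| ^ p :=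
        (ENNReal.ofReal_rpow_of_nonneg (abs_nonneg _) hp₀.le).symm
    _ ≤ (∑' i, ENNReal.ofReal (chainIncrement f s t N i)) ^ p := by
        gcongr
        exact ofReal_abs_sub_le_tsum_chainIncrement f (hf.mono (Set.Icc_subset_Icc hs ht)) h₁
    _ ≤ ENNReal.ofReal (cConst α p) ^ p * ∑' i : ℕ, ENNReal.ofReal (((i : ℝ) + 1) ^ (α * p)) *
          ENNReal.ofReal (chainIncrement f s t N i) ^ p := tsum_rpow_le_cConst_rpow_mul hp hα _
    _ ≤ ENNReal.ofReal (cConst α p) ^ p * ∑' i : ℕ, ENNReal.ofReal (((i : ℝ) + 1) ^ (α * p)) *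
          (2 ^ (p - 1) * dyadicIncrSum f p s t (N + i)) := by
        gcongr with i
        exact ofReal_chainIncrement_rpow_le f hp.le h₁ h₂ i
    _ = _ := by
        simp_rw [mul_left_comm _ ((2 : ℝ≥0∞) ^ (p - 1))]
        rw [ENNReal.tsum_mul_left, ← mul_assoc, ENNReal.ofReal_mul (by positivity),
          ← ENNReal.ofReal_rpow_of_nonneg (cConst_nonneg α p) hp₀.le,
          ← ENNReal.ofReal_rpow_of_pos two_pos, ENNReal.ofReal_ofNat, mul_comm (2 ^ (p - 1))]

/-- Dyadic bound on increments: for `p > 1`, `α > 1 - 1/p`, `f` continuous on `[0,2]` and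
`0 ≤ s < t ≤ 2` with `t - s ≤ 1`, letting `N = n(t-s)` be the unique integer with
`2^{-N} ≤ t - s < 2^{-N+1}`, one has
`|f(t) - f(s)|^p ≤ 2^{p-1} c(α,p)^p ∑_{i=0}^∞ (i+1)^{αp} ∑_k |f((k+1)2^{-(N+i)}) - f(k 2^{-(N+i)})|^p`,
the inner sum running over all integers `k` with `s ≤ k 2^{-(N+i)}` and `(k+1) 2^{-(N+i)} ≤ t`. -/
theorem increment_dyadic_bound (p α : ℝ) (hp : 1 < p) (hα : 1 - 1/p < α)
    (f : ℝ → ℝ) (hf : ContinuousOn f (Set.Icc 0 2))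
    (s t : ℝ) (hs : 0 ≤ s) (hst : s < t) (ht : t ≤ 2) (hlen : t - s ≤ 1)
    (N : ℕ) (hN1 : (2:ℝ) ^ (-(N:ℤ)) ≤ t - s) (hN2 : t - s < (2:ℝ) ^ (-(N:ℤ) + 1)) :
    ENNReal.ofReal (|f t - f s| ^ p) ≤
      ENNReal.ofReal (2 ^ (p - 1) * cConst α p ^ p) *
        ∑' i : ℕ, ENNReal.ofReal (((i : ℝ) + 1) ^ (α * p)) *
          ∑' k : ℤ, (if s ≤ (k : ℝ) / 2 ^ (N + i) ∧ ((k : ℝ) + 1) / 2 ^ (N + i) ≤ t then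
            ENNReal.ofReal (|f (((k : ℝ) + 1) / 2 ^ (N + i)) - f ((k : ℝ) / 2 ^ (N + i))| ^ p)
            else 0) :=
  increment_dyadic_bound_general p α hp hα f hf s t hs ht N hN1 hN2
end

section
/- Let p > 2, 0 ≤ h_1 < h_2 ≤ 1, and let g ∈ L²([−1,1]) with G(t) := ∫_{−1}^t g(s) ds. Then V_p(T_{h_2}^G − T_{h_1}^G) ≤ d_p ‖g‖_{L²([−1,1])} (h_2 − h_1)^{1/2 − 1/p}, where d_p := 2^{1/2 + 1/p} (1 + 2^{p/2})^{1/p}; equivalently, for every finite dissection 0 = t_0 < t_1 < ... < t_n = 1 of [0,1], Σ_{i=0}^{n−1} | ∫_{h_1−1+t_{i+1}}^{h_2−1+t_{i+1}} g(s) ds − ∫_{h_1−1+t_i}^{h_2−1+t_i} g(s) ds |^p ≤ d_p^p ‖g‖_{L²}^p (h_2 − h_1)^{(1/2 − 1/p)p}. -/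
open MeasureTheory ProbabilityTheory Filter
open scoped ENNReal NNReal

/-- The `p`-variation functional of a path `g` (restricted to `[0,1]` via dissections
`0 = t 0 < t 1 < ... < t n = 1`), with values in `[0,∞]`. -/
noncomputable def pVar {V : Type*} [NormedAddCommGroup V] (p : ℝ) (g : ℝ → V) : ℝ≥0∞ :=
  ⨆ (n : ℕ) (t : Fin (n+1) → ℝ) (_ : StrictMono t) (_ : t 0 = 0) (_ : t (Fin.last n) = 1),
    (∑ i : Fin n, (ENNReal.ofReal ‖g (t i.succ) - g (t i.castSucc)‖) ^ p) ^ p⁻¹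

/-!
Write `G = ∫_{-1}^· g`, `Φ = ∫_{-1}^· g²` and `K = Φ 1 - Φ (-1) = ‖g‖²`. Cauchy–Schwarz gives
`(G y - G x)² ≤ (y - x) (Φ y - Φ x)`, and this is all that is used about `G`. Along a dissection,
each increment `Δᵢ` of `T_{h₂}^G - T_{h₁}^G` is controlled in two ways: vertically, both frames
differ by an integral over an interval of length `h₂ - h₁`, so `|Δᵢ| ≤ 2 √((h₂ - h₁) K)`;
horizontally, `Δᵢ` is a difference of increments of the two frames, whose squares are bounded by
increments of `Φ`, which telescope, so `∑ Δᵢ² ≤ 4 K`. Then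
`∑ |Δᵢ|^p ≤ (max |Δᵢ|)^(p-2) ∑ Δᵢ²` yields the bound with the constant `2 ≤ d_p`.
-/

theorem Fin.sum_univ_succ_sub_castSucc {M : Type*} [AddCommGroup M] {n : ℕ}
    (f : Fin (n + 1) → M) :
    ∑ i : Fin n, (f i.succ - f i.castSucc) = f (Fin.last n) - f 0 := by
  induction n with
  | zero => simp
  | succ n ih =>
    rw [Fin.sum_univ_castSucc]
    simp only [Fin.succ_castSucc]
    rw [ih (fun i => f i.castSucc), Fin.succ_last, Fin.castSucc_zero]
    abel

theorem pVar_le_ofReal {V : Type*} [NormedAddCommGroup V] {p C : ℝ} (hp : 0 < p) {g : ℝ → V}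
    (h : ∀ (n : ℕ) (t : Fin (n + 1) → ℝ), StrictMono t → t 0 = 0 → t (Fin.last n) = 1 →
      (∑ i : Fin n, ‖g (t i.succ) - g (t i.castSucc)‖ ^ p) ^ p⁻¹ ≤ C) :
    pVar p g ≤ ENNReal.ofReal C := by
  refine iSup_le fun n => iSup_le fun t => iSup_le fun ht => iSup_le fun ht0 =>
    iSup_le fun htl => ?_
  have hsum_nonneg : 0 ≤ ∑ i : Fin n, ‖g (t i.succ) - g (t i.castSucc)‖ ^ p :=
    Finset.sum_nonneg fun _ _ => Real.rpow_nonneg (norm_nonneg _) p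
  simp_rw [ENNReal.ofReal_rpow_of_nonneg (norm_nonneg _) hp.le]
  rw [← ENNReal.ofReal_sum_of_nonneg fun _ _ => Real.rpow_nonneg (norm_nonneg _) p,
    ENNReal.ofReal_rpow_of_nonneg hsum_nonneg (inv_nonneg.2 hp.le)]
  exact ENNReal.ofReal_le_ofReal (h n t ht ht0 htl)

theorem Finset.sum_abs_rpow_le_mul_sum_sq {ι : Type*} (s : Finset ι) {x : ι → ℝ} {M p : ℝ}
    (hp : 2 ≤ p) (hx : ∀ i ∈ s, |x i| ≤ M) :
    ∑ i ∈ s, |x i| ^ p ≤ M ^ (p - 2) * ∑ i ∈ s, x i ^ 2 := by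
  rw [Finset.mul_sum]
  refine Finset.sum_le_sum fun i hi => ?_
  calc |x i| ^ p = |x i| ^ (p - 2) * |x i| ^ (2 : ℝ) := by
        rw [← Real.rpow_add' (abs_nonneg _) (by linarith), sub_add_cancel]
    _ ≤ M ^ (p - 2) * x i ^ 2 := by
        rw [Real.rpow_two, sq_abs]
        gcongr
        exact hx i hi

section SquareIntegrable

variable {α : Type*} [MeasurableSpace α] {μ : Measure α} {g : α → ℝ}

theorem sq_integral_le_measureReal_mul_integral_sq [IsFiniteMeasure μ] (hg : MemLp g 2 μ) :
    (∫ x, g x ∂μ) ^ 2 ≤ μ.real Set.univ * ∫ x, g x ^ 2 ∂μ := by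
  have hg' : MemLp g (ENNReal.ofReal 2) μ := by simpa using hg
  have holder := integral_mul_norm_le_Lp_mul_Lq Real.HolderConjugate.two_two hg'
    (memLp_const (1 : ℝ))
  simp only [norm_one, mul_one, one_pow, integral_const, smul_eq_mul, Real.norm_eq_abs,
    Real.rpow_two, sq_abs] at holder
  calc (∫ x, g x ∂μ) ^ 2 ≤ (∫ x, |g x| ∂μ) ^ 2 := by
        rw [← sq_abs]; exact pow_le_pow_left₀ (abs_nonneg _) (abs_integral_le_integral_abs) 2
    _ ≤ ((∫ x, g x ^ 2 ∂μ) ^ (1 / 2 : ℝ) * μ.real Set.univ ^ (1 / 2 : ℝ)) ^ 2 :=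
        pow_le_pow_left₀ (integral_nonneg fun _ => abs_nonneg _) holder 2
    _ = μ.real Set.univ * ∫ x, g x ^ 2 ∂μ := by
        rw [mul_pow, ← Real.sqrt_eq_rpow, ← Real.sqrt_eq_rpow,
          Real.sq_sqrt (integral_nonneg fun _ => sq_nonneg _), Real.sq_sqrt measureReal_nonneg,
          mul_comm]

theorem MeasureTheory.MemLp.eLpNorm_two_eq (hg : MemLp g 2 μ) :
    eLpNorm g 2 μ = ENNReal.ofReal √(∫ x, g x ^ 2 ∂μ) := by
  rw [hg.eLpNorm_eq_integral_rpow_norm two_ne_zero ENNReal.ofNat_ne_top, Real.sqrt_eq_rpow]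
  simp [sq_abs]

end SquareIntegrable

theorem sq_intervalIntegral_le {g : ℝ → ℝ} {a b : ℝ} (hab : a ≤ b)
    (hg : MemLp g 2 (volume.restrict (Set.Ioc a b))) :
    (∫ x in a..b, g x) ^ 2 ≤ (b - a) * ∫ x in a..b, g x ^ 2 := by
  have : IsFiniteMeasure (volume.restrict (Set.Ioc a b)) := by
    rw [isFiniteMeasure_restrict]; exact measure_Ioc_lt_top.ne
  simpa [intervalIntegral.integral_of_le hab, hab] using
    sq_integral_le_measureReal_mul_integral_sq hg

theorem sq_primitive_sub_le {g : ℝ → ℝ} {a b : ℝ}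
    (hg : MemLp g 2 (volume.restrict (Set.Icc a b))) {x y : ℝ} (hx : a ≤ x) (hxy : x ≤ y)
    (hy : y ≤ b) :
    ((∫ s in a..y, g s) - ∫ s in a..x, g s) ^ 2 ≤
      (y - x) * ((∫ s in a..y, g s ^ 2) - ∫ s in a..x, g s ^ 2) := by
  have hg_on : ∀ {c d}, a ≤ c → d ≤ b → MemLp g 2 (volume.restrict (Set.Ioc c d)) :=
    fun hc hd => hg.mono_measure (Measure.restrict_mono (Set.Ioc_subset_Icc_self.trans
      (Set.Icc_subset_Icc hc hd)) le_rfl)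
  have hint : ∀ {c}, a ≤ c → c ≤ b → IntervalIntegrable g volume a c := fun hc hcb =>
    (intervalIntegrable_iff_integrableOn_Ioc_of_le hc).2 ((hg_on le_rfl hcb).integrable one_le_two)
  have hint_sq : ∀ {c}, a ≤ c → c ≤ b → IntervalIntegrable (fun s => g s ^ 2) volume a c :=
    fun hc hcb =>
      (intervalIntegrable_iff_integrableOn_Ioc_of_le hc).2 (hg_on le_rfl hcb).integrable_sq
  rw [intervalIntegral.integral_interval_sub_left (hint (hx.trans hxy) hy)
      (hint hx (hxy.trans hy)),
    intervalIntegral.integral_interval_sub_left (hint_sq (hx.trans hxy) hy)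
      (hint_sq hx (hxy.trans hy))]
  exact sq_intervalIntegral_le hxy (hg_on hx hy)

def frame (f : ℝ → ℝ) (h u : ℝ) : ℝ := f (h - 1 + u)

def SqIncrementsControlledBy (G Φ : ℝ → ℝ) : Prop :=
  ∀ ⦃x y⦄, -1 ≤ x → x ≤ y → y ≤ 1 → (G y - G x) ^ 2 ≤ (y - x) * (Φ y - Φ x)

namespace SqIncrementsControlledBy

variable {G Φ : ℝ → ℝ}

theorem monotoneOn (hGΦ : SqIncrementsControlledBy G Φ) : MonotoneOn Φ (Set.Icc (-1) 1) := by
  intro x hx y hy hxy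
  rcases hxy.eq_or_lt with rfl | hlt
  · rfl
  · exact sub_nonneg.1 <| (mul_nonneg_iff_of_pos_left (sub_pos.2 hlt)).1 <|
      (sq_nonneg _).trans (hGΦ hx.1 hxy hy.2)

theorem sq_sub_le_sub (hGΦ : SqIncrementsControlledBy G Φ) {x y : ℝ} (hx : -1 ≤ x) (hxy : x ≤ y)
    (hy : y ≤ 1) (hlen : y - x ≤ 1) : (G y - G x) ^ 2 ≤ Φ y - Φ x := by
  have hΦ : 0 ≤ Φ y - Φ x :=
    sub_nonneg.2 (hGΦ.monotoneOn ⟨hx, hxy.trans hy⟩ ⟨hx.trans hxy, hy⟩ hxy)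
  exact (hGΦ hx hxy hy).trans (mul_le_of_le_one_left hΦ hlen)

variable {h₁ h₂ : ℝ}

theorem sq_frame_sub_le (hGΦ : SqIncrementsControlledBy G Φ) (hh₁ : 0 ≤ h₁) (hh : h₁ ≤ h₂)
    (hh₂ : h₂ ≤ 1) {u : ℝ} (hu : u ∈ Set.Icc (0 : ℝ) 1) :
    (frame G h₂ u - frame G h₁ u) ^ 2 ≤ (h₂ - h₁) * (Φ 1 - Φ (-1)) := by
  obtain ⟨hu₀, hu₁⟩ := hu
  have hx : -1 ≤ h₁ - 1 + u := by linarith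
  have hy : h₂ - 1 + u ≤ 1 := by linarith
  have hxy : h₁ - 1 + u ≤ h₂ - 1 + u := by linarith
  have hΦ_le : Φ (h₂ - 1 + u) - Φ (h₁ - 1 + u) ≤ Φ 1 - Φ (-1) := by
    have := hGΦ.monotoneOn ⟨hx.trans hxy, hy⟩ ⟨by norm_num, le_rfl⟩ hy
    have := hGΦ.monotoneOn ⟨le_rfl, by norm_num⟩ ⟨hx, hxy.trans hy⟩ hx
    linarith
  calc (frame G h₂ u - frame G h₁ u) ^ 2
      ≤ ((h₂ - 1 + u) - (h₁ - 1 + u)) * (Φ (h₂ - 1 + u) - Φ (h₁ - 1 + u)) := hGΦ hx hxy hy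
    _ ≤ (h₂ - h₁) * (Φ 1 - Φ (-1)) := by
        rw [show (h₂ - 1 + u) - (h₁ - 1 + u) = h₂ - h₁ by ring]
        exact mul_le_mul_of_nonneg_left hΦ_le (by linarith)

theorem sum_sq_frame_sub_le (hGΦ : SqIncrementsControlledBy G Φ) {h : ℝ}
    (hh : h ∈ Set.Icc (0 : ℝ) 1) {n : ℕ} {t : Fin (n + 1) → ℝ} (ht : Monotone t)
    (htI : ∀ i, t i ∈ Set.Icc (0 : ℝ) 1) :
    ∑ i : Fin n, (frame G h (t i.succ) - frame G h (t i.castSucc)) ^ 2 ≤ Φ 1 - Φ (-1) := by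
  have hmem : ∀ i, h - 1 + t i ∈ Set.Icc (-1 : ℝ) 1 := fun i => by
    obtain ⟨h₀, h₁⟩ := hh; obtain ⟨t₀, t₁⟩ := htI i; constructor <;> linarith
  have hterm : ∀ i : Fin n, (frame G h (t i.succ) - frame G h (t i.castSucc)) ^ 2 ≤
      frame Φ h (t i.succ) - frame Φ h (t i.castSucc) := fun i => by
    have hle := ht (Fin.castSucc_le_succ i)
    exact hGΦ.sq_sub_le_sub (hmem _).1 (by linarith) (hmem _).2
      (by linarith [(htI i.succ).2, (htI i.castSucc).1])
  calc ∑ i : Fin n, (frame G h (t i.succ) - frame G h (t i.castSucc)) ^ 2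
      ≤ ∑ i : Fin n, (frame Φ h (t i.succ) - frame Φ h (t i.castSucc)) :=
        Finset.sum_le_sum fun i _ => hterm i
    _ = Φ (h - 1 + t (Fin.last n)) - Φ (h - 1 + t 0) :=
        Fin.sum_univ_succ_sub_castSucc (fun i => frame Φ h (t i))
    _ ≤ Φ 1 - Φ (-1) := by
        have := hGΦ.monotoneOn (hmem _) ⟨by norm_num, le_rfl⟩ (hmem (Fin.last n)).2
        have := hGΦ.monotoneOn ⟨le_rfl, by norm_num⟩ (hmem 0) (hmem 0).1
        linarith

theorem sum_sq_frame_sub_frame_le (hGΦ : SqIncrementsControlledBy G Φ) (hh₁ : 0 ≤ h₁)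
    (hh : h₁ ≤ h₂) (hh₂ : h₂ ≤ 1) {n : ℕ} {t : Fin (n + 1) → ℝ} (ht : Monotone t)
    (htI : ∀ i, t i ∈ Set.Icc (0 : ℝ) 1) :
    ∑ i : Fin n, ((frame G h₂ - frame G h₁) (t i.succ) -
      (frame G h₂ - frame G h₁) (t i.castSucc)) ^ 2 ≤ 4 * (Φ 1 - Φ (-1)) := by
  have hsq : ∀ x y : ℝ, (x - y) ^ 2 ≤ 2 * x ^ 2 + 2 * y ^ 2 := fun x y => by
    nlinarith [sq_nonneg (x + y)]
  calc _ ≤ ∑ i : Fin n, (2 * (frame G h₂ (t i.succ) - frame G h₂ (t i.castSucc)) ^ 2 +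
          2 * (frame G h₁ (t i.succ) - frame G h₁ (t i.castSucc)) ^ 2) :=
        Finset.sum_le_sum fun i _ =>
          le_of_eq_of_le (by simp only [Pi.sub_apply]; ring) (hsq _ _)
    _ ≤ 2 * (Φ 1 - Φ (-1)) + 2 * (Φ 1 - Φ (-1)) := by
        rw [Finset.sum_add_distrib, ← Finset.mul_sum, ← Finset.mul_sum]
        gcongr
        · exact hGΦ.sum_sq_frame_sub_le ⟨hh₁.trans hh, hh₂⟩ ht htI
        · exact hGΦ.sum_sq_frame_sub_le ⟨hh₁, hh.trans hh₂⟩ ht htI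
    _ = 4 * (Φ 1 - Φ (-1)) := by ring

theorem pVar_frame_sub_le (hGΦ : SqIncrementsControlledBy G Φ) {p : ℝ} (hp : 2 ≤ p)
    (hh₁ : 0 ≤ h₁) (hh : h₁ ≤ h₂) (hh₂ : h₂ ≤ 1) :
    pVar p (frame G h₂ - frame G h₁) ≤
      ENNReal.ofReal (2 * √(Φ 1 - Φ (-1)) * (h₂ - h₁) ^ (1 / 2 - 1 / p)) := by
  have hK : 0 ≤ Φ 1 - Φ (-1) :=
    sub_nonneg.2 (hGΦ.monotoneOn ⟨le_rfl, by norm_num⟩ ⟨by norm_num, le_rfl⟩ (by norm_num))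
  have hδ : 0 ≤ h₂ - h₁ := sub_nonneg.2 hh
  refine pVar_le_ofReal (by linarith) fun n t ht ht0 htl => ?_
  have htI : ∀ i, t i ∈ Set.Icc (0 : ℝ) 1 := fun i =>
    ⟨ht0 ▸ ht.monotone (Fin.zero_le i), htl ▸ ht.monotone (Fin.le_last i)⟩
  set c := 2 * √(Φ 1 - Φ (-1)) with hc
  set H := frame G h₂ - frame G h₁
  have hvert : ∀ u ∈ Set.Icc (0 : ℝ) 1, |H u| ≤ √(h₂ - h₁) * √(Φ 1 - Φ (-1)) := fun u hu => by
    rw [← Real.sqrt_mul hδ, ← Real.sqrt_sq_eq_abs]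
    exact Real.sqrt_le_sqrt (hGΦ.sq_frame_sub_le hh₁ hh hh₂ hu)
  have hmax : ∀ i : Fin n, |H (t i.succ) - H (t i.castSucc)| ≤ c * √(h₂ - h₁) := fun i => by
    have := hvert _ (htI i.succ); have := hvert _ (htI i.castSucc)
    calc |H (t i.succ) - H (t i.castSucc)| ≤ |H (t i.succ)| + |H (t i.castSucc)| := abs_sub _ _
      _ ≤ c * √(h₂ - h₁) := by linarith
  have hquad : ∑ i : Fin n, (H (t i.succ) - H (t i.castSucc)) ^ 2 ≤ c ^ 2 := by
    rw [hc, mul_pow, Real.sq_sqrt hK]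
    linarith [hGΦ.sum_sq_frame_sub_frame_le hh₁ hh hh₂ ht.monotone htI]
  calc (∑ i : Fin n, ‖H (t i.succ) - H (t i.castSucc)‖ ^ p) ^ p⁻¹
      ≤ ((c * √(h₂ - h₁)) ^ (p - 2) * c ^ 2) ^ p⁻¹ := by
        simp only [Real.norm_eq_abs]
        gcongr
        exact (Finset.univ.sum_abs_rpow_le_mul_sum_sq hp fun i _ => hmax i).trans (by gcongr)
    _ = (c ^ p * (h₂ - h₁) ^ ((p - 2) / 2)) ^ p⁻¹ := by
        rw [Real.mul_rpow (by positivity) (Real.sqrt_nonneg _), Real.sqrt_eq_rpow,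
          ← Real.rpow_mul hδ, ← Real.rpow_two c, mul_right_comm,
          ← Real.rpow_add' (by positivity) (by linarith), sub_add_cancel, one_div_mul_eq_div]
    _ = c * (h₂ - h₁) ^ (1 / 2 - 1 / p) := by
        rw [Real.mul_rpow (by positivity) (by positivity), ← Real.rpow_mul (by positivity),
          ← Real.rpow_mul hδ, mul_inv_cancel₀ (by linarith), Real.rpow_one]
        congr 2
        field_simp

end SqIncrementsControlledBy

theorem two_le_rpow_mul_one_add_rpow_rpow {p : ℝ} (hp : 0 < p) :
    2 ≤ (2 : ℝ) ^ ((1 : ℝ) / 2 + 1 / p) * (1 + (2 : ℝ) ^ (p / 2)) ^ (1 / p) := by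
  calc (2 : ℝ) = 2 ^ ((1 : ℝ) / 2) * ((2 : ℝ) ^ (p / 2)) ^ (1 / p) := by
        rw [← Real.rpow_mul zero_le_two, ← Real.rpow_add two_pos,
          show (1 : ℝ) / 2 + p / 2 * (1 / p) = 1 by field_simp; norm_num, Real.rpow_one]
    _ ≤ 2 ^ ((1 : ℝ) / 2 + 1 / p) * (1 + (2 : ℝ) ^ (p / 2)) ^ (1 / p) := by
        gcongr
        · exact one_le_two
        · exact le_add_of_nonneg_right (by positivity)
        · linarith

/-- **Cameron–Martin–Lipschitz bound for the `p`-variation of frame increments.** Let `p > 2`,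
`0 ≤ h₁ < h₂ ≤ 1`, `g ∈ L²([-1,1])` and `G(t) = ∫_{-1}^t g(s) ds`. Then
`V_p(T_{h₂}^G - T_{h₁}^G) ≤ d_p ‖g‖_{L²([-1,1])} (h₂-h₁)^{1/2-1/p}` with
`d_p = 2^{1/2+1/p} (1 + 2^{p/2})^{1/p}`. -/
theorem frame_pvar_cameronMartin_bound (p : ℝ) (hp : 2 < p)
    (h₁ h₂ : ℝ) (hh₁ : 0 ≤ h₁) (hh : h₁ < h₂) (hh₂ : h₂ ≤ 1)
    (g : ℝ → ℝ) (hg : MemLp g 2 (volume.restrict (Set.Icc (-1:ℝ) 1))) :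
    pVar p (fun u => (∫ s in (-1:ℝ)..(h₂ - 1 + u), g s) - ∫ s in (-1:ℝ)..(h₁ - 1 + u), g s) ≤
      ENNReal.ofReal ((2:ℝ) ^ ((1:ℝ)/2 + 1/p) * (1 + (2:ℝ) ^ (p/2)) ^ (1/p)) *
        eLpNorm g 2 (volume.restrict (Set.Icc (-1:ℝ) 1)) *
        ENNReal.ofReal ((h₂ - h₁) ^ ((1:ℝ)/2 - 1/p)) := by
  have hGΦ : SqIncrementsControlledBy (fun x => ∫ s in (-1 : ℝ)..x, g s)
      (fun x => ∫ s in (-1 : ℝ)..x, g s ^ 2) :=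
    fun _ _ hx hxy hy => sq_primitive_sub_le hg hx hxy hy
  have hK : (∫ s in (-1 : ℝ)..1, g s ^ 2) - ∫ s in (-1 : ℝ)..(-1), g s ^ 2 =
      ∫ s in Set.Icc (-1 : ℝ) 1, g s ^ 2 := by
    rw [intervalIntegral.integral_same, sub_zero, intervalIntegral.integral_of_le (by norm_num),
      integral_Icc_eq_integral_Ioc]
  calc _ ≤ ENNReal.ofReal
          (2 * √(∫ s in Set.Icc (-1 : ℝ) 1, g s ^ 2) * (h₂ - h₁) ^ (1 / 2 - 1 / p)) :=
        hK ▸ hGΦ.pVar_frame_sub_le hp.le hh₁ hh.le hh₂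
    _ ≤ _ := by
        rw [hg.eLpNorm_two_eq, ← ENNReal.ofReal_mul (by positivity),
          ← ENNReal.ofReal_mul (by positivity)]
        gcongr
        exact two_le_rpow_mul_one_add_rpow_rpow (by linarith)
end

section
/- Let p > 2 and 0 < h ≤ 1, and let a ≤ t_0 < t_1 < ... < t_n ≤ b be real numbers with b − a ≤ 2. Then Σ_{i=0}^{n−1} min( (t_{i+1} − t_i)^{p/2}, h^{p/2} ) ≤ (2 + 2^{p/2+1}) h^{p/2 − 1}. -/
/-!
Write `q = p/2 > 1`. A piece of length `d` contributes `min(d^q, h^q) ≤ d h^(q-1)`: if `d ≤ h`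
then `d^q = d d^(q-1) ≤ d h^(q-1)`, and otherwise `h^q = h h^(q-1) ≤ d h^(q-1)`. Summing over the
pieces telescopes to at most `(b - a) h^(q-1) ≤ 2 h^(q-1)`.
-/

theorem Fin.sum_succ_sub_castSucc {G : Type*} [AddCommGroup G] (n : ℕ) (t : Fin (n + 1) → G) :
    ∑ i : Fin n, (t i.succ - t i.castSucc) = t (Fin.last n) - t 0 := by
  have hsucc := Fin.sum_univ_succ t
  have hcast := Fin.sum_univ_castSucc t
  rw [hsucc] at hcast
  rw [Finset.sum_sub_distrib, sub_eq_sub_iff_add_eq_add, add_comm, hcast, add_comm]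

theorem min_rpow_le_mul_rpow_sub_one {d h q : ℝ} (hd : 0 ≤ d) (hh : 0 < h) (hq : 1 ≤ q) :
    min (d ^ q) (h ^ q) ≤ d * h ^ (q - 1) := by
  have hq' : 0 ≤ q - 1 := by linarith
  rcases le_total d h with hdh | hhd
  · calc min (d ^ q) (h ^ q) ≤ d ^ q := min_le_left _ _
      _ = d * d ^ (q - 1) := by rw [← Real.rpow_one_add' hd (by linarith), add_sub_cancel]
      _ ≤ d * h ^ (q - 1) := by gcongr
  · calc min (d ^ q) (h ^ q) ≤ h ^ q := min_le_right _ _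
      _ = h * h ^ (q - 1) := by rw [← Real.rpow_one_add' hh.le (by linarith), add_sub_cancel]
      _ ≤ d * h ^ (q - 1) := by gcongr

theorem sum_min_rpow_le_of_monotone {n : ℕ} {t : Fin (n + 1) → ℝ} (ht : Monotone t) {h q : ℝ}
    (hh : 0 < h) (hq : 1 ≤ q) :
    ∑ i : Fin n, min ((t i.succ - t i.castSucc) ^ q) (h ^ q) ≤
      (t (Fin.last n) - t 0) * h ^ (q - 1) := by
  rw [← Fin.sum_succ_sub_castSucc, Finset.sum_mul]
  gcongr with i
  exact min_rpow_le_mul_rpow_sub_one (sub_nonneg.2 (ht Fin.castSucc_lt_succ.le)) hh hq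

theorem dissection_min_bound_general (p h a b : ℝ) (hp : 2 < p) (h0 : 0 < h)
    (hab : b - a ≤ 2) (n : ℕ) (t : Fin (n+1) → ℝ) (hmono : StrictMono t)
    (ha : a ≤ t 0) (hb : t (Fin.last n) ≤ b) :
    ∑ i : Fin n, min ((t i.succ - t i.castSucc) ^ (p/2)) (h ^ (p/2)) ≤
      (2 + 2 ^ (p/2 + 1)) * h ^ (p/2 - 1) := by
  have hlen : t (Fin.last n) - t 0 ≤ 2 + 2 ^ (p/2 + 1) := by
    have : (0 : ℝ) ≤ 2 ^ (p/2 + 1) := by positivity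
    linarith
  calc ∑ i : Fin n, min ((t i.succ - t i.castSucc) ^ (p/2)) (h ^ (p/2))
      ≤ (t (Fin.last n) - t 0) * h ^ (p/2 - 1) :=
        sum_min_rpow_le_of_monotone hmono.monotone h0 (by linarith)
    _ ≤ (2 + 2 ^ (p/2 + 1)) * h ^ (p/2 - 1) := by gcongr

/-- **Dissection estimate.** Let `p > 2`, `0 < h ≤ 1` and `a ≤ t₀ < t₁ < ... < t_n ≤ b` with
`b - a ≤ 2`. Then `∑_{i=0}^{n-1} min((t_{i+1} - t_i)^{p/2}, h^{p/2}) ≤ (2 + 2^{p/2+1}) h^{p/2-1}`. -/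
theorem dissection_min_bound (p h a b : ℝ) (hp : 2 < p) (h0 : 0 < h) (h1 : h ≤ 1)
    (hab : b - a ≤ 2) (n : ℕ) (t : Fin (n+1) → ℝ) (hmono : StrictMono t)
    (ha : a ≤ t 0) (hb : t (Fin.last n) ≤ b) :
    ∑ i : Fin n, min ((t i.succ - t i.castSucc) ^ (p/2)) (h ^ (p/2)) ≤
      (2 + 2 ^ (p/2 + 1)) * h ^ (p/2 - 1) :=
  dissection_min_bound_general p h a b hp h0 hab n t hmono ha hb
end
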